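/- If a finite strategic game G is solved by iterated elimination of strictly dominated strategies, i.e., some iterated elimination leaves each player with exactly one strategy, then the resulting joint strategy is the unique Nash equilibrium of G. -/

import Mathlib

/-! A strategy removed in a step `R →_S R'` is strictly dominated within `R`, so it is never a
best response to a profile in `R`: Nash equilibria of `R` survive into `R'`. Conversely, over a
finite `R i` a best response within `R i` exists and, being undominated, lies in `R' i`; so a
Nash equilibrium of `R'` is one of `R`. Hence IESDS preserves the set of Nash equilibria, and on
the final singleton restriction that set is `{s}`. -/

variable {ι : Type*} {S : ι → Type*}

/-- `si` is strictly dominated by `si'` in the restriction `R`. -/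
def StrictlyDominatedIn [DecidableEq ι] (p : ι → (∀ i, S i) → ℝ)
    (R : ∀ i, Set (S i)) (i : ι) (si si' : S i) : Prop :=
  ∀ t : ∀ j, S j, (∀ j, t j ∈ R j) →
    p i (Function.update t i si') > p i (Function.update t i si)

/-- One step of elimination of strictly dominated strategies: `R →_S R'`. -/
def StepS [DecidableEq ι] (p : ι → (∀ i, S i) → ℝ) (R R' : ∀ i, Set (S i)) : Prop :=
  R ≠ R' ∧ (∀ i, R' i ⊆ R i) ∧
    ∀ i, ∀ si ∈ R i, si ∉ R' i → ∃ si' ∈ R i, StrictlyDominatedIn p R i si si'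

/-- `s` is a Nash equilibrium of the restriction `R`. -/
def NashOn [DecidableEq ι] (p : ι → (∀ i, S i) → ℝ) (R : ∀ i, Set (S i))
    (s : ∀ i, S i) : Prop :=
  (∀ i, s i ∈ R i) ∧ ∀ i, ∀ si' ∈ R i, p i s ≥ p i (Function.update s i si')

section

variable [DecidableEq ι] {p : ι → (∀ i, S i) → ℝ} {R R' : ∀ i, Set (S i)} {s : ∀ i, S i}

theorem NashOn.of_stepS (h : StepS p R R') (hs : NashOn p R s) : NashOn p R' s := by
  obtain ⟨-, hsub, helim⟩ := h
  obtain ⟨hmem, hbest⟩ := hs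
  refine ⟨fun i => ?_, fun i si' hsi' => hbest i si' (hsub i hsi')⟩
  by_contra hni
  obtain ⟨si', hsi', hdom⟩ := helim i (s i) (hmem i) hni
  have hlt : p i s < p i (Function.update s i si') := by
    simpa only [Function.update_eq_self] using hdom s hmem
  exact (hbest i si' hsi').not_gt hlt

theorem NashOn.of_stepS_of_finite [∀ i, Finite (S i)] (h : StepS p R R')
    (hs : NashOn p R' s) : NashOn p R s := by
  obtain ⟨-, hsub, helim⟩ := h
  obtain ⟨hmem', hbest'⟩ := hs
  have hmem : ∀ i, s i ∈ R i := fun i => hsub i (hmem' i)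
  refine ⟨hmem, fun i si' hsi' => ?_⟩
  obtain ⟨b, hb, hbmax⟩ := Set.exists_max_image (R i)
    (fun x => p i (Function.update s i x)) (Set.toFinite _) ⟨s i, hmem i⟩
  have hb' : b ∈ R' i := by
    by_contra hn
    obtain ⟨c, hc, hdom⟩ := helim i b hb hn
    exact (hbmax c hc).not_gt (hdom s hmem)
  calc p i s ≥ p i (Function.update s i b) := hbest' i b hb'
    _ ≥ p i (Function.update s i si') := hbmax si' hsi'

theorem nashOn_iff_of_reflTransGen_stepS [∀ i, Finite (S i)]
    (h : Relation.ReflTransGen (StepS p) R R') : NashOn p R s ↔ NashOn p R' s := by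
  induction h with
  | refl => rfl
  | tail _ hstep ih => exact ih.trans ⟨(·.of_stepS hstep), (·.of_stepS_of_finite hstep)⟩

theorem nashOn_iff_of_eq_singleton (hR : ∀ i, R i = {s i}) {s' : ∀ i, S i} :
    NashOn p R s' ↔ s' = s := by
  constructor
  · exact fun hs' => funext fun i => by simpa only [hR i, Set.mem_singleton_iff] using hs'.1 i
  · rintro rfl
    refine ⟨fun i => by simp only [hR i, Set.mem_singleton_iff], fun i si' hsi' => ?_⟩
    rw [hR i] at hsi'
    rw [hsi', Function.update_eq_self]

end

theorem stmt3_general [DecidableEq ι] [∀ i, Fintype (S i)]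
    (p : ι → (∀ i, S i) → ℝ) (R : ∀ i, Set (S i)) (s : ∀ i, S i)
    (hreach : Relation.ReflTransGen (StepS p) (fun i => (Set.univ : Set (S i))) R)
    (hsingle : ∀ i, R i = {s i}) :
    NashOn p (fun i => (Set.univ : Set (S i))) s ∧
      ∀ s' : ∀ i, S i, NashOn p (fun i => (Set.univ : Set (S i))) s' → s' = s := by
  have hnash : ∀ s', NashOn p (fun i => (Set.univ : Set (S i))) s' ↔ s' = s := fun s' =>
    (nashOn_iff_of_reflTransGen_stepS hreach).trans (nashOn_iff_of_eq_singleton hsingle)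
  exact ⟨(hnash s).2 rfl, fun s' => (hnash s').1⟩

/-- If a finite strategic game is solved by IESDS, leaving each player with exactly
one strategy, then the resulting joint strategy is its unique Nash equilibrium. -/
theorem stmt3 [DecidableEq ι] [Fintype ι] [∀ i, Fintype (S i)] [∀ i, Nonempty (S i)]
    (p : ι → (∀ i, S i) → ℝ) (R : ∀ i, Set (S i)) (s : ∀ i, S i)
    (hreach : Relation.ReflTransGen (StepS p) (fun i => (Set.univ : Set (S i))) R)
    (hsingle : ∀ i, R i = {s i}) :
    NashOn p (fun i => (Set.univ : Set (S i))) s ∧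
      ∀ s' : ∀ i, S i, NashOn p (fun i => (Set.univ : Set (S i))) s' → s' = s :=
  stmt3_general p R s hreach hsingle
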